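/- arXiv:math/0510440 — 3 statements merged into one kernel-verified Lean document; each statement's English description precedes it below -/
import Mathlib

section
/- The family {A_n}_{n∈ℤ} with A_{2k} = (z²-a²)^k and A_{2k+1} = z(z²-a²)^k (a ≠ 0) is a ℂ-vector space basis of the algebra ℂ[z][(z-a)⁻¹, (z+a)⁻¹] of rational functions in z with poles only at z = a, z = -a and ∞. -/
open Polynomial

/-- Monic polynomials with `natDegree (f m) = m` are linearly independent. -/
lemma threePt_li_aux {f : ℕ → Polynomial ℂ} (hm : ∀ m, (f m).Monic)
    (hd : ∀ m, (f m).natDegree = m) : LinearIndependent ℂ f := by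
  rw [linearIndependent_iff]
  intro l hl
  by_contra hne
  have hsupp : l.support.Nonempty := Finsupp.support_nonempty_iff.mpr hne
  have hmem : l.support.max' hsupp ∈ l.support := l.support.max'_mem hsupp
  set m := l.support.max' hsupp with hmdef
  have hc : (Finsupp.linearCombination ℂ f l).coeff m = l m := by
    rw [Finsupp.linearCombination_apply, Finsupp.sum, Polynomial.finset_sum_coeff,
      Finset.sum_eq_single m]
    · have h1 : (f m).coeff m = 1 := by
        have := (hm m).coeff_natDegree
        rwa [hd m] at this
      rw [Polynomial.coeff_smul, h1, smul_eq_mul, mul_one]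
    · intro i hi hne'
      rw [Polynomial.coeff_smul, Polynomial.coeff_eq_zero_of_natDegree_lt, smul_zero]
      rw [hd i]
      exact lt_of_le_of_ne (Finset.le_max' _ _ hi) hne'
    · intro h; exact absurd hmem h
  rw [hl, Polynomial.coeff_zero] at hc
  exact (Finsupp.mem_support_iff.mp hmem) hc.symm

/-- Polynomial counterparts of the `threePtA` family. -/
noncomputable def threePtP (a : ℂ) (m : ℕ) : Polynomial ℂ :=
  if Even m then (X ^ 2 - C (a ^ 2)) ^ (m / 2)
  else X * (X ^ 2 - C (a ^ 2)) ^ (m / 2)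

lemma threePtP_monic (a : ℂ) (m : ℕ) : (threePtP a m).Monic := by
  have h : (X ^ 2 - C (a ^ 2) : Polynomial ℂ).Monic := monic_X_pow_sub_C _ two_ne_zero
  unfold threePtP
  split
  · exact h.pow _
  · exact monic_X.mul (h.pow _)

lemma threePtP_natDegree (a : ℂ) (m : ℕ) : (threePtP a m).natDegree = m := by
  have h : (X ^ 2 - C (a ^ 2) : Polynomial ℂ).Monic := monic_X_pow_sub_C (a ^ 2) two_ne_zero
  have hdeg : (X ^ 2 - C (a ^ 2) : Polynomial ℂ).natDegree = 2 := natDegree_X_pow_sub_C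
  unfold threePtP
  split
  case isTrue he =>
    rw [natDegree_pow, hdeg]
    rw [Nat.even_iff] at he; omega
  case isFalse ho =>
    rw [natDegree_mul X_ne_zero (pow_ne_zero _ h.ne_zero), natDegree_X, natDegree_pow, hdeg]
    rw [Nat.even_iff] at ho; omega

/-- The three-point genus zero functions `A_{2k} = (z²-a²)^k`, `A_{2k+1} = z(z²-a²)^k`. -/
noncomputable def threePtA (a : ℂ) (n : ℤ) : RatFunc ℂ :=
  if Even n then (RatFunc.X ^ 2 - RatFunc.C (a ^ 2)) ^ (n / 2)
  else RatFunc.X * (RatFunc.X ^ 2 - RatFunc.C (a ^ 2)) ^ ((n - 1) / 2)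

lemma threePt_algebraMap (a : ℂ) :
    algebraMap (Polynomial ℂ) (RatFunc ℂ) (X ^ 2 - C (a ^ 2))
      = RatFunc.X ^ 2 - RatFunc.C (a ^ 2) := by
  simp [map_sub, map_pow, RatFunc.algebraMap_X, RatFunc.algebraMap_C]

lemma threePt_W_ne_zero (a : ℂ) : (RatFunc.X ^ 2 - RatFunc.C (a ^ 2) : RatFunc ℂ) ≠ 0 := by
  rw [← threePt_algebraMap]
  exact RatFunc.algebraMap_ne_zero (monic_X_pow_sub_C (a ^ 2) two_ne_zero).ne_zero

lemma threePtA_mul_pow (a : ℂ) (N : ℕ) (n : ℤ) (hn : -(2 * (N : ℤ)) ≤ n) :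
    threePtA a n * (RatFunc.X ^ 2 - RatFunc.C (a ^ 2)) ^ N
      = algebraMap (Polynomial ℂ) (RatFunc ℂ) (threePtP a (n + 2 * N).toNat) := by
  set W : RatFunc ℂ := RatFunc.X ^ 2 - RatFunc.C (a ^ 2) with hW
  have hW0 : W ≠ 0 := threePt_W_ne_zero a
  have key : ∀ k : ℤ, 0 ≤ k →
      W ^ k = algebraMap (Polynomial ℂ) (RatFunc ℂ) ((X ^ 2 - C (a ^ 2)) ^ k.toNat) := by
    intro k hk
    conv_lhs => rw [← Int.toNat_of_nonneg hk]
    rw [map_pow, threePt_algebraMap, ← hW, zpow_natCast]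
  have hNz : (W : RatFunc ℂ) ^ (N : ℕ) = W ^ (N : ℤ) := (zpow_natCast _ _).symm
  rcases Int.even_or_odd n with he | ho
  · have he' := Int.even_iff.mp he
    rw [threePtA, if_pos he, threePtP, if_pos (by rw [Nat.even_iff]; omega)]
    rw [hNz, ← zpow_add₀ hW0, key _ (by omega)]
    congr 2
    omega
  · have ho' := Int.odd_iff.mp ho
    rw [threePtA, if_neg (Int.not_even_iff_odd.mpr ho), threePtP,
      if_neg (by rw [Nat.even_iff]; omega)]
    rw [mul_assoc, hNz, ← zpow_add₀ hW0, key _ (by omega), map_mul, RatFunc.algebraMap_X]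
    congr 3
    omega

lemma threePtA_linearIndependent (a : ℂ) : LinearIndependent ℂ (threePtA a) := by
  rw [linearIndependent_iff]
  intro l hl
  set s := l.support with hs
  set N : ℕ := s.sup Int.natAbs with hN
  have hbound : ∀ n ∈ s, -(2 * (N : ℤ)) ≤ n := by
    intro n hn
    have := Finset.le_sup (f := Int.natAbs) hn
    omega
  have hsum : ∑ n ∈ s, l n • threePtA a n = 0 := by
    rwa [Finsupp.linearCombination_apply, Finsupp.sum] at hl
  set φ := IsScalarTower.toAlgHom ℂ (Polynomial ℂ) (RatFunc ℂ) with hφ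
  have hφ' : ∀ p : Polynomial ℂ, φ p = algebraMap (Polynomial ℂ) (RatFunc ℂ) p := fun p => rfl
  have h4 : φ (∑ n ∈ s, l n • threePtP a (n + 2 * N).toNat) = 0 := by
    rw [map_sum]
    have : ∀ n ∈ s, φ (l n • threePtP a (n + 2 * N).toNat)
        = l n • (threePtA a n * (RatFunc.X ^ 2 - RatFunc.C (a ^ 2)) ^ N) := by
      intro n hn
      rw [map_smul, hφ', ← threePtA_mul_pow a N n (hbound n hn)]
    rw [Finset.sum_congr rfl this]
    calc ∑ n ∈ s, l n • (threePtA a n * (RatFunc.X ^ 2 - RatFunc.C (a ^ 2)) ^ N)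
        = (∑ n ∈ s, l n • threePtA a n) * (RatFunc.X ^ 2 - RatFunc.C (a ^ 2)) ^ N := by
          rw [Finset.sum_mul]
          exact Finset.sum_congr rfl fun n _ => (smul_mul_assoc _ _ _).symm
      _ = 0 := by rw [hsum, zero_mul]
  have h5 : ∑ n ∈ s, l n • threePtP a (n + 2 * N).toNat = 0 :=
    RatFunc.algebraMap_injective ℂ (by rw [map_zero]; exact h4)
  have hginj : ∀ x ∈ s, ∀ y ∈ s,
      (x + 2 * (N : ℤ)).toNat = (y + 2 * (N : ℤ)).toNat → x = y := by
    intro x hx y hy h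
    have hx' := hbound x hx; have hy' := hbound y hy; omega
  have h6 : ∑ m ∈ s.image (fun n : ℤ => (n + 2 * (N : ℤ)).toNat),
      l ((m : ℤ) - 2 * N) • threePtP a m = 0 := by
    rw [Finset.sum_image hginj, ← h5]
    refine Finset.sum_congr rfl fun n hn => ?_
    have harg : (((n + 2 * (N : ℤ)).toNat : ℤ)) - 2 * N = n := by
      have := hbound n hn; omega
    rw [harg]
  have h7 := linearIndependent_iff'.mp
    (threePt_li_aux (threePtP_monic a) (threePtP_natDegree a)) _ _ h6
  ext n
  by_cases hns : n ∈ s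
  · have h8 := h7 ((n + 2 * (N : ℤ)).toNat) (Finset.mem_image_of_mem _ hns)
    have harg : (((n + 2 * (N : ℤ)).toNat : ℤ)) - 2 * N = n := by
      have := hbound n hns; omega
    rw [harg] at h8
    simpa using h8
  · simpa using Finsupp.notMem_support_iff.mp hns

lemma threePtA_span (a : ℂ) :
    Submodule.span ℂ (Set.range (threePtA a)) =
      Subalgebra.toSubmodule (Algebra.adjoin ℂ
        ({RatFunc.X, (RatFunc.X - RatFunc.C a)⁻¹, (RatFunc.X + RatFunc.C a)⁻¹} :
          Set (RatFunc ℂ))) := by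
  set W : RatFunc ℂ := RatFunc.X ^ 2 - RatFunc.C (a ^ 2) with hW
  have hW0 : W ≠ 0 := threePt_W_ne_zero a
  have hfactor : W = (RatFunc.X - RatFunc.C a) * (RatFunc.X + RatFunc.C a) := by
    have : RatFunc.C (a ^ 2) = RatFunc.C a ^ 2 := map_pow _ _ _
    rw [hW, this]; ring
  have hAeven : ∀ n : ℤ, Even n → threePtA a n = W ^ (n / 2) := by
    intro n hn; rw [threePtA, if_pos hn]
  have hAodd : ∀ n : ℤ, ¬ Even n → threePtA a n = RatFunc.X * W ^ ((n - 1) / 2) := by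
    intro n hn; rw [threePtA, if_neg hn]
  set G : Set (RatFunc ℂ) :=
    {RatFunc.X, (RatFunc.X - RatFunc.C a)⁻¹, (RatFunc.X + RatFunc.C a)⁻¹} with hG
  set sp := Submodule.span ℂ (Set.range (threePtA a)) with hsp
  -- membership of the family in the adjoin
  have hXmem : RatFunc.X ∈ Algebra.adjoin ℂ G := Algebra.subset_adjoin (by simp [hG])
  have h1mem : (RatFunc.X - RatFunc.C a)⁻¹ ∈ Algebra.adjoin ℂ G :=
    Algebra.subset_adjoin (by simp [hG])
  have h2mem : (RatFunc.X + RatFunc.C a)⁻¹ ∈ Algebra.adjoin ℂ G :=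
    Algebra.subset_adjoin (by simp [hG])
  have hWmem : W ∈ Algebra.adjoin ℂ G := by
    rw [hW]
    refine sub_mem (pow_mem hXmem 2) ?_
    have : RatFunc.C (a ^ 2) = algebraMap ℂ (RatFunc ℂ) (a ^ 2) := rfl
    rw [this]
    exact Subalgebra.algebraMap_mem _ _
  have hWinv : W⁻¹ ∈ Algebra.adjoin ℂ G := by
    rw [hfactor, mul_inv]
    exact mul_mem h1mem h2mem
  have hzmem : ∀ k : ℤ, W ^ k ∈ Algebra.adjoin ℂ G := by
    intro k
    rcases le_or_gt 0 k with h | h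
    · rw [← Int.toNat_of_nonneg h, zpow_natCast]
      exact pow_mem hWmem _
    · rw [show k = -((-k).toNat : ℤ) by omega, zpow_neg, zpow_natCast, ← inv_pow]
      exact pow_mem hWinv _
  have hmemA : ∀ n : ℤ, threePtA a n ∈ Algebra.adjoin ℂ G := by
    intro n
    by_cases hn : Even n
    · rw [hAeven n hn]; exact hzmem _
    · rw [hAodd n hn]; exact mul_mem hXmem (hzmem _)
  -- products of family members lie in the span
  have hX2W : RatFunc.X ^ 2 = W + RatFunc.C (a ^ 2) := by rw [hW]; ring
  have hmulAA : ∀ m n : ℤ, threePtA a m * threePtA a n ∈ sp := by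
    intro m n
    by_cases hm : Even m <;> by_cases hn : Even n
    · have hm' := Int.even_iff.mp hm
      have hn' := Int.even_iff.mp hn
      rw [hAeven m hm, hAeven n hn, ← zpow_add₀ hW0]
      refine Submodule.subset_span ⟨m + n, ?_⟩
      rw [hAeven (m + n) (by rw [Int.even_iff]; omega)]
      congr 1
      omega
    · have hm' := Int.even_iff.mp hm
      have hn' := Int.not_even_iff.mp hn
      rw [hAeven m hm, hAodd n hn, mul_left_comm, ← zpow_add₀ hW0]
      refine Submodule.subset_span ⟨m + n, ?_⟩
      rw [hAodd (m + n) (by rw [Int.not_even_iff]; omega)]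
      congr 2
      omega
    · have hm' := Int.not_even_iff.mp hm
      have hn' := Int.even_iff.mp hn
      rw [hAodd m hm, hAeven n hn, mul_assoc, ← zpow_add₀ hW0]
      refine Submodule.subset_span ⟨m + n, ?_⟩
      rw [hAodd (m + n) (by rw [Int.not_even_iff]; omega)]
      congr 2
      omega
    · have hm' := Int.not_even_iff.mp hm
      have hn' := Int.not_even_iff.mp hn
      rw [hAodd m hm, hAodd n hn]
      have hkey : (RatFunc.X * W ^ ((m - 1) / 2)) * (RatFunc.X * W ^ ((n - 1) / 2))
          = W ^ ((m - 1) / 2 + (n - 1) / 2 + 1)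
            + RatFunc.C (a ^ 2) * W ^ ((m - 1) / 2 + (n - 1) / 2) := by
        calc (RatFunc.X * W ^ ((m - 1) / 2)) * (RatFunc.X * W ^ ((n - 1) / 2))
            = RatFunc.X ^ 2 * (W ^ ((m - 1) / 2) * W ^ ((n - 1) / 2)) := by ring
          _ = (W + RatFunc.C (a ^ 2)) * W ^ ((m - 1) / 2 + (n - 1) / 2) := by
              rw [← zpow_add₀ hW0, hX2W]
          _ = _ := by rw [add_mul, mul_comm W, ← zpow_add_one₀ hW0]
      rw [hkey]
      refine add_mem (Submodule.subset_span ⟨m + n, ?_⟩) ?_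
      · rw [hAeven (m + n) (by rw [Int.even_iff]; omega)]
        congr 1
        omega
      · rw [← RatFunc.smul_eq_C_mul]
        refine Submodule.smul_mem _ _ (Submodule.subset_span ⟨m + n - 2, ?_⟩)
        rw [hAeven (m + n - 2) (by rw [Int.even_iff]; omega)]
        congr 1
        omega
  have hone : (1 : RatFunc ℂ) ∈ sp := by
    refine Submodule.subset_span ⟨0, ?_⟩
    rw [hAeven 0 Even.zero]
    norm_num
  have hmul : ∀ x y : RatFunc ℂ, x ∈ sp → y ∈ sp → x * y ∈ sp := by
    intro x y hx hy
    have h := Submodule.mul_mem_mul hx hy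
    rw [hsp, Submodule.span_mul_span] at h
    refine Submodule.span_le.mpr ?_ h
    rintro z ⟨u, hu, v, hv, rfl⟩
    obtain ⟨mm, rfl⟩ := hu
    obtain ⟨nn, rfl⟩ := hv
    exact hmulAA mm nn
  -- generators lie in the span
  have hA1 : threePtA a 1 = RatFunc.X := by
    rw [hAodd 1 (by decide)]
    norm_num
  have hAm1 : threePtA a (-1) = RatFunc.X * W⁻¹ := by
    rw [hAodd (-1) (by decide), show ((-1 - 1 : ℤ) / 2) = -1 by decide, zpow_neg_one]
  have hAm2 : threePtA a (-2) = W⁻¹ := by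
    rw [hAeven (-2) (by decide), show ((-2 : ℤ) / 2) = -1 by decide, zpow_neg_one]
  have hXa : (RatFunc.X - RatFunc.C a) ≠ 0 ∧ (RatFunc.X + RatFunc.C a) ≠ 0 := by
    rw [hfactor] at hW0
    exact mul_ne_zero_iff.mp hW0
  have hinv1 : (RatFunc.X - RatFunc.C a)⁻¹ = RatFunc.X * W⁻¹ + a • W⁻¹ := by
    rw [RatFunc.smul_eq_C_mul]
    refine inv_eq_of_mul_eq_one_right ?_
    calc (RatFunc.X - RatFunc.C a) * (RatFunc.X * W⁻¹ + RatFunc.C a * W⁻¹)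
        = ((RatFunc.X - RatFunc.C a) * (RatFunc.X + RatFunc.C a)) * W⁻¹ := by ring
      _ = W * W⁻¹ := by rw [← hfactor]
      _ = 1 := mul_inv_cancel₀ hW0
  have hinv2 : (RatFunc.X + RatFunc.C a)⁻¹ = RatFunc.X * W⁻¹ + (-a) • W⁻¹ := by
    rw [RatFunc.smul_eq_C_mul, map_neg]
    refine inv_eq_of_mul_eq_one_right ?_
    calc (RatFunc.X + RatFunc.C a) * (RatFunc.X * W⁻¹ + -RatFunc.C a * W⁻¹)
        = ((RatFunc.X - RatFunc.C a) * (RatFunc.X + RatFunc.C a)) * W⁻¹ := by ring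
      _ = W * W⁻¹ := by rw [← hfactor]
      _ = 1 := mul_inv_cancel₀ hW0
  have hgen : G ⊆ (sp.toSubalgebra hone hmul : Set (RatFunc ℂ)) := by
    intro x hx
    rcases hx with rfl | rfl | rfl
    · exact Submodule.subset_span ⟨1, hA1⟩
    · show _ ∈ sp
      rw [hinv1]
      exact add_mem (Submodule.subset_span ⟨-1, hAm1⟩)
        (Submodule.smul_mem _ _ (Submodule.subset_span ⟨-2, hAm2⟩))
    · show _ ∈ sp
      rw [hinv2]
      exact add_mem (Submodule.subset_span ⟨-1, hAm1⟩)
        (Submodule.smul_mem _ _ (Submodule.subset_span ⟨-2, hAm2⟩))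
  apply le_antisymm
  · refine Submodule.span_le.mpr ?_
    rintro x ⟨n, rfl⟩
    exact hmemA n
  · intro x hx
    have : x ∈ Algebra.adjoin ℂ G := hx
    exact Algebra.adjoin_le hgen this

/-- for `a ≠ 0`, the family `{Aₙ}_{n∈ℤ}` is a ℂ-basis of the algebra
`ℂ[z][(z-a)⁻¹,(z+a)⁻¹]` of rational functions with poles only at `z = ±a` (and `∞`):
it is linearly independent and spans this subalgebra of `ℂ(z)`. -/
theorem threePtA_is_basis (a : ℂ) (ha : a ≠ 0) :
    LinearIndependent ℂ (threePtA a) ∧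
    Submodule.span ℂ (Set.range (threePtA a)) =
      Subalgebra.toSubmodule (Algebra.adjoin ℂ
        ({RatFunc.X, (RatFunc.X - RatFunc.C a)⁻¹, (RatFunc.X + RatFunc.C a)⁻¹} :
          Set (RatFunc ℂ))) := by
  exact ⟨threePtA_linearIndependent a, threePtA_span a⟩
end

section
/- The bilinear map γ on the three-point genus-zero algebra 𝒜 defined by γ(A_n, A_m) = -n δ_{m,-n} for n,m even, γ(A_n, A_m) = 0 for n,m of different parity, and γ(A_n, A_m) = -n δ_{m,-n} - a²(n-1) δ_{m,-n+2} for n,m odd, is antisymmetric and satisfies γ(A_n·A_m, A_k) + γ(A_m·A_k, A_n) + γ(A_k·A_n, A_m) = 0, where the product is A_n·A_m = A_{n+m} (n or m even), A_{n+m} + a²A_{n+m-2} (both odd). -/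
/-- The three-point genus zero function algebra `𝒜`: commutative product on `ℤ →₀ ℂ`
with basis `Aₙ = single n 1`, `Aₙ·Aₘ = A_{n+m}` (n or m even),
`A_{n+m} + a²A_{n+m-2}` (both odd). -/
noncomputable def threePtMul (a : ℂ) (f g : ℤ →₀ ℂ) : ℤ →₀ ℂ :=
  Finsupp.sum f fun n c => Finsupp.sum g fun m d =>
    if Even n ∨ Even m then Finsupp.single (n + m) (c * d)
    else Finsupp.single (n + m) (c * d) + a ^ 2 • Finsupp.single (n + m - 2) (c * d)

/-- The geometric cocycle values `γ(Aₙ,Aₘ) = (1/2πi)∮_{C_S} Aₙ dAₘ` on basis elements. -/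
noncomputable def threePtGamma0 (a : ℂ) (n m : ℤ) : ℂ :=
  if Even n ∧ Even m then -(n : ℂ) * (if m = -n then 1 else 0)
  else if Odd n ∧ Odd m then
    -(n : ℂ) * (if m = -n then 1 else 0)
      - a ^ 2 * ((n : ℂ) - 1) * (if m = -n + 2 then 1 else 0)
  else 0

/-- The bilinear extension of `γ` to `𝒜`. -/
noncomputable def threePtGamma (a : ℂ) (f g : ℤ →₀ ℂ) : ℂ :=
  Finsupp.sum f fun n c => Finsupp.sum g fun m d => c * d * threePtGamma0 a n m

noncomputable def K (a : ℂ) (h : ℤ →₀ ℂ) (p : ℤ) : ℂ :=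
  Finsupp.sum h fun m d => d * threePtGamma0 a p m

lemma gamma_eq (a : ℂ) (f h : ℤ →₀ ℂ) :
    threePtGamma a f h = Finsupp.sum f fun n c => c * K a h n := by
  unfold threePtGamma K
  refine Finsupp.sum_congr fun n _ => ?_
  rw [Finsupp.mul_sum]
  exact Finsupp.sum_congr fun m _ => by ring

lemma gamma_single (a : ℂ) (p : ℤ) (x : ℂ) (h : ℤ →₀ ℂ) :
    threePtGamma a (Finsupp.single p x) h = x * K a h p := by
  rw [gamma_eq]
  exact Finsupp.sum_single_index (by simp)

lemma gamma_add_left (a : ℂ) (f f' h : ℤ →₀ ℂ) :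
    threePtGamma a (f + f') h = threePtGamma a f h + threePtGamma a f' h := by
  rw [gamma_eq, gamma_eq, gamma_eq]
  exact Finsupp.sum_add_index' (fun _ => zero_mul _) (fun _ _ _ => add_mul _ _ _)

noncomputable def gammaHom (a : ℂ) (h : ℤ →₀ ℂ) : (ℤ →₀ ℂ) →+ ℂ where
  toFun := fun x => threePtGamma a x h
  map_zero' := by simp [threePtGamma]
  map_add' := fun f f' => gamma_add_left a f f' h

lemma gamma_finsuppSum (a : ℂ) (f : ℤ →₀ ℂ) (B : ℤ → ℂ → (ℤ →₀ ℂ)) (h : ℤ →₀ ℂ) :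
    threePtGamma a (Finsupp.sum f B) h = Finsupp.sum f fun n c => threePtGamma a (B n c) h :=
  map_finsuppSum (gammaHom a h) f B

noncomputable def Gam (a : ℂ) (n m k : ℤ) : ℂ :=
  threePtGamma0 a (n + m) k +
    if Odd n ∧ Odd m then a ^ 2 * threePtGamma0 a (n + m - 2) k else 0

lemma key (a : ℂ) (f g h : ℤ →₀ ℂ) :
    threePtGamma a (threePtMul a f g) h =
      ∑ n ∈ f.support, ∑ m ∈ g.support, ∑ k ∈ h.support,
        f n * g m * h k * Gam a n m k := by
  unfold threePtMul
  rw [gamma_finsuppSum, Finsupp.sum]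
  refine Finset.sum_congr rfl fun n _ => ?_
  rw [gamma_finsuppSum, Finsupp.sum]
  refine Finset.sum_congr rfl fun m _ => ?_
  by_cases hp : Even n ∨ Even m
  · have hno : ¬(Odd n ∧ Odd m) := by
      rcases hp with h | h
      · exact fun hc => (Int.not_odd_iff_even.mpr h) hc.1
      · exact fun hc => (Int.not_odd_iff_even.mpr h) hc.2
    rw [if_pos hp, gamma_single]
    unfold K
    rw [Finsupp.sum, Finset.mul_sum]
    refine Finset.sum_congr rfl fun k _ => ?_
    rw [Gam, if_neg hno]
    ring
  · push_neg at hp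
    have hodd : Odd n ∧ Odd m :=
      ⟨Int.not_even_iff_odd.mp hp.1, Int.not_even_iff_odd.mp hp.2⟩
    rw [if_neg (by push_neg; exact hp), gamma_add_left, gamma_single,
      Finsupp.smul_single, gamma_single]
    unfold K
    rw [Finsupp.sum, Finsupp.sum, Finset.mul_sum, Finset.mul_sum,
      ← Finset.sum_add_distrib]
    refine Finset.sum_congr rfl fun k _ => ?_
    rw [Gam, if_pos hodd]
    simp only [smul_eq_mul]
    ring

lemma gamma0_anti (a : ℂ) (n m : ℤ) : threePtGamma0 a n m = - threePtGamma0 a m n := by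
  unfold threePtGamma0
  simp only [Int.even_iff, Int.odd_iff]
  split_ifs <;> first | (exfalso; omega) | (subst_vars; push_cast; ring)

lemma g0_eq (a : ℂ) (n m : ℤ) : threePtGamma0 a n m =
    if n % 2 = m % 2 then
      -(n : ℂ) * (if m = -n then 1 else 0) -
        (if n % 2 = 1 then a ^ 2 * ((n : ℂ) - 1) * (if m = -n + 2 then 1 else 0) else 0)
    else 0 := by
  unfold threePtGamma0
  simp only [Int.even_iff, Int.odd_iff]
  split_ifs <;> first | (exfalso; omega) | ring

set_option maxHeartbeats 1000000 in
lemma Gam_cyclic (a : ℂ) (n m k : ℤ) :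
    Gam a n m k + Gam a m k n + Gam a k n m = 0 := by
  unfold Gam
  simp only [g0_eq, Int.odd_iff]
  rcases Int.emod_two_eq n with hn | hn <;>
    rcases Int.emod_two_eq m with hm | hm <;>
      rcases Int.emod_two_eq k with hk | hk <;>
  · simp only [Int.sub_emod (n + m) 2 2, Int.sub_emod (m + k) 2 2, Int.sub_emod (k + n) 2 2,
      Int.add_emod n m 2, Int.add_emod m k 2, Int.add_emod k n 2, hn, hm, hk]
    norm_num
    try split_ifs <;> first | (exfalso; omega) | (subst_vars; push_cast; ring)

lemma reorder (s t u : Finset ℤ) (F : ℤ → ℤ → ℤ → ℂ) :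
    (∑ x ∈ s, ∑ y ∈ t, ∑ z ∈ u, F x y z) = ∑ z ∈ u, ∑ x ∈ s, ∑ y ∈ t, F x y z :=
  calc (∑ x ∈ s, ∑ y ∈ t, ∑ z ∈ u, F x y z)
      = ∑ x ∈ s, ∑ z ∈ u, ∑ y ∈ t, F x y z :=
        Finset.sum_congr rfl fun _ _ => Finset.sum_comm
    _ = ∑ z ∈ u, ∑ x ∈ s, ∑ y ∈ t, F x y z := Finset.sum_comm


/-- `γ` is antisymmetric and satisfies the cyclic cocycle identity
`γ(Aₙ·Aₘ, Aₖ) + γ(Aₘ·Aₖ, Aₙ) + γ(Aₖ·Aₙ, Aₘ) = 0` with respect to the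
three-point product. -/
theorem threePtGamma_cocycle (a : ℂ) :
    (∀ f g : ℤ →₀ ℂ, threePtGamma a f g = - threePtGamma a g f) ∧
    (∀ f g h : ℤ →₀ ℂ,
      threePtGamma a (threePtMul a f g) h + threePtGamma a (threePtMul a g h) f
        + threePtGamma a (threePtMul a h f) g = 0) := by
  constructor
  · intro f g
    unfold threePtGamma
    simp only [Finsupp.sum]
    rw [Finset.sum_comm, ← Finset.sum_neg_distrib]
    refine Finset.sum_congr rfl fun m _ => ?_
    rw [← Finset.sum_neg_distrib]
    refine Finset.sum_congr rfl fun n _ => ?_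
    linear_combination f n * g m * gamma0_anti a n m
  · intro f g h
    rw [key a f g h, key a g h f, key a h f g]
    rw [reorder g.support h.support f.support, reorder h.support f.support g.support,
      reorder g.support h.support f.support]
    rw [← Finset.sum_add_distrib, ← Finset.sum_add_distrib]
    refine Finset.sum_eq_zero fun n _ => ?_
    rw [← Finset.sum_add_distrib, ← Finset.sum_add_distrib]
    refine Finset.sum_eq_zero fun m _ => ?_
    rw [← Finset.sum_add_distrib, ← Finset.sum_add_distrib]
    refine Finset.sum_eq_zero fun k _ => ?_
    linear_combination f n * g m * h k * Gam_cyclic a n m k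
end

section
/- The bilinear map γ on the torus function algebra 𝒜_T defined by γ(A_n,A_m) = -n δ_{m,-n} for n,m even, γ(A_n,A_m) = 0 for different parity, and γ(A_n,A_m) = -n δ_{m,-n} + 3e₁(-n+1)δ_{m,-n+2} + (e₁-e₂)(2e₁+e₂)(-n+2)δ_{m,-n+4} for n,m odd, is antisymmetric and satisfies the cyclic cocycle identity γ(A_n A_m, A_k) + γ(A_m A_k, A_n) + γ(A_k A_n, A_m) = 0 with respect to the torus product. -/
/-!
Both `γ` and the product are biadditive, so both identities reduce to basis elements.
On `Aₙ, Aₘ` antisymmetry is a check on Kronecker deltas. For the cocycle identity, every index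
produced by `AₙAₘ` has the parity of `n + m`, and `γ(Aₚ, A_q)` vanishes unless `p ≡ q (mod 2)`,
so the cyclic sum vanishes termwise when `n + m + k` is odd; when it is even, up to rotation
either all of `n, m, k` are even or exactly `n, m` are odd. In both cases the cyclic sum is
supported on `n + m + k ∈ {0, 2, 4}` and on each of these hyperplanes it is a linear identity in
`n, m, k`.
-/


/-- The torus Krichever–Novikov function algebra product on `ℤ →₀ ℂ` (cf. Statement 13). -/
noncomputable def torusMul (e₁ e₂ : ℂ) (f g : ℤ →₀ ℂ) : ℤ →₀ ℂ :=
  Finsupp.sum f fun n c => Finsupp.sum g fun m d =>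
    if Even n ∨ Even m then Finsupp.single (n + m) (c * d)
    else Finsupp.single (n + m) (c * d)
      + (3 * e₁) • Finsupp.single (n + m - 2) (c * d)
      + ((e₁ - e₂) * (2 * e₁ + e₂)) • Finsupp.single (n + m - 4) (c * d)

/-- The geometric cocycle values `γ(Aₙ,Aₘ) = (1/2πi)∮_{C_S} Aₙ dAₘ` on the torus. -/
noncomputable def torusGamma0 (e₁ e₂ : ℂ) (n m : ℤ) : ℂ :=
  if Even n ∧ Even m then -(n : ℂ) * (if m = -n then 1 else 0)
  else if Odd n ∧ Odd m then
    -(n : ℂ) * (if m = -n then 1 else 0)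
      + 3 * e₁ * (-(n : ℂ) + 1) * (if m = -n + 2 then 1 else 0)
      + (e₁ - e₂) * (2 * e₁ + e₂) * (-(n : ℂ) + 2) * (if m = -n + 4 then 1 else 0)
  else 0

/-- The bilinear extension of `γ` to `𝒜_T`. -/
noncomputable def torusGamma (e₁ e₂ : ℂ) (f g : ℤ →₀ ℂ) : ℂ :=
  Finsupp.sum f fun n c => Finsupp.sum g fun m d => c * d * torusGamma0 e₁ e₂ n m

open Finsupp

section BiadditiveExtension

variable {α β R M : Type*} [Semiring R] [AddCommMonoid M]

noncomputable def Finsupp.biadditiveExt (K : α → β → R →+ M) (f : α →₀ R) (g : β →₀ R) : M :=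
  f.sum fun n c => g.sum fun m d => K n m (c * d)

variable (K : α → β → R →+ M)

theorem Finsupp.biadditiveExt_add_left (f f' : α →₀ R) (g : β →₀ R) :
    biadditiveExt K (f + f') g = biadditiveExt K f g + biadditiveExt K f' g :=
  sum_add_index' (by simp) fun n c c' => by simp only [add_mul, map_add, sum_add]

theorem Finsupp.biadditiveExt_add_right (f : α →₀ R) (g g' : β →₀ R) :
    biadditiveExt K f (g + g') = biadditiveExt K f g + biadditiveExt K f g' := by
  simp only [biadditiveExt, ← sum_add]
  exact sum_congr fun n _ => sum_add_index' (by simp) fun m d d' => by simp [mul_add]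

theorem Finsupp.biadditiveExt_single_single (n : α) (c : R) (m : β) (d : R) :
    biadditiveExt K (single n c) (single m d) = K n m (c * d) := by
  simp [biadditiveExt]

end BiadditiveExtension

section AdditiveExtensionality

variable {α R M : Type*} [AddZeroClass R] [AddLeftCancelMonoid M]

theorem Finsupp.eq_zero_of_map_add_of_map_single {φ : (α →₀ R) → M}
    (hadd : ∀ f f', φ (f + f') = φ f + φ f') (hsingle : ∀ n a, φ (single n a) = 0)
    (f : α →₀ R) : φ f = 0 := by
  induction f using Finsupp.induction_linear with
  | zero => simpa using hadd 0 0
  | add f f' hf hf' => rw [hadd, hf, hf', add_zero]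
  | single n a => exact hsingle n a

theorem Finsupp.eq_zero_of_rotate_of_map_add_left
    {F : (α →₀ R) → (α →₀ R) → (α →₀ R) → M} (hrot : ∀ f g h, F f g h = F g h f)
    (hadd : ∀ f f' g h, F (f + f') g h = F f g h + F f' g h)
    (hsingle : ∀ n a m b k c, F (single n a) (single m b) (single k c) = 0)
    (f g h : α →₀ R) : F f g h = 0 := by
  have hsingle₂ (n a m b) (h : α →₀ R) : F (single n a) (single m b) h = 0 := by
    rw [← hrot]
    exact eq_zero_of_map_add_of_map_single (φ := fun h => F h (single n a) (single m b))
      (fun h h' => hadd h h' _ _) (fun k c => by rw [hrot]; exact hsingle n a m b k c) h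
  have hsingle₁ (n a) (g h : α →₀ R) : F (single n a) g h = 0 := by
    rw [hrot]
    exact eq_zero_of_map_add_of_map_single (φ := fun g => F g h (single n a))
      (fun g g' => hadd g g' _ _) (fun m b => by rw [← hrot]; exact hsingle₂ n a m b h) g
  exact eq_zero_of_map_add_of_map_single (φ := fun f => F f g h)
    (fun f f' => hadd f f' g h) (fun n a => hsingle₁ n a g h) f

end AdditiveExtensionality

section Torus

variable (e₁ e₂ : ℂ)

/-- `x Aₙ Aₘ`. -/
noncomputable def torusMulKernel (n m : ℤ) : ℂ →+ (ℤ →₀ ℂ) where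
  toFun x :=
    if Even n ∨ Even m then single (n + m) x
    else single (n + m) x + (3 * e₁) • single (n + m - 2) x
      + ((e₁ - e₂) * (2 * e₁ + e₂)) • single (n + m - 4) x
  map_zero' := by simp
  map_add' x y := by split_ifs <;> simp only [single_add, smul_add]; abel

theorem torusMul_eq_biadditiveExt : torusMul e₁ e₂ = biadditiveExt (torusMulKernel e₁ e₂) := rfl

theorem torusGamma_eq_biadditiveExt :
    torusGamma e₁ e₂ = biadditiveExt fun n m => AddMonoidHom.mulRight (torusGamma0 e₁ e₂ n m) :=
  rfl

theorem torusGamma_add_left (f f' g : ℤ →₀ ℂ) :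
    torusGamma e₁ e₂ (f + f') g = torusGamma e₁ e₂ f g + torusGamma e₁ e₂ f' g := by
  rw [torusGamma_eq_biadditiveExt, biadditiveExt_add_left]

theorem torusGamma_add_right (f g g' : ℤ →₀ ℂ) :
    torusGamma e₁ e₂ f (g + g') = torusGamma e₁ e₂ f g + torusGamma e₁ e₂ f g' := by
  rw [torusGamma_eq_biadditiveExt, biadditiveExt_add_right]

theorem torusGamma_single_single (n m : ℤ) (c d : ℂ) :
    torusGamma e₁ e₂ (single n c) (single m d) = c * d * torusGamma0 e₁ e₂ n m := by
  rw [torusGamma_eq_biadditiveExt, biadditiveExt_single_single, AddMonoidHom.coe_mulRight]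

theorem torusMul_add_left (f f' g : ℤ →₀ ℂ) :
    torusMul e₁ e₂ (f + f') g = torusMul e₁ e₂ f g + torusMul e₁ e₂ f' g := by
  rw [torusMul_eq_biadditiveExt, biadditiveExt_add_left]

theorem torusMul_add_right (f g g' : ℤ →₀ ℂ) :
    torusMul e₁ e₂ f (g + g') = torusMul e₁ e₂ f g + torusMul e₁ e₂ f g' := by
  rw [torusMul_eq_biadditiveExt, biadditiveExt_add_right]

theorem torusMul_single_single (n m : ℤ) (c d : ℂ) :
    torusMul e₁ e₂ (single n c) (single m d) = torusMulKernel e₁ e₂ n m (c * d) := by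
  rw [torusMul_eq_biadditiveExt, biadditiveExt_single_single]

theorem torusGamma0_add_swap (n m : ℤ) :
    torusGamma0 e₁ e₂ n m + torusGamma0 e₁ e₂ m n = 0 := by
  unfold torusGamma0
  simp only [Int.even_iff, Int.odd_iff]
  split_ifs <;> first | (exfalso; omega) | (subst_vars; push_cast; ring)

theorem torusGamma_add_swap (f g : ℤ →₀ ℂ) :
    torusGamma e₁ e₂ f g + torusGamma e₁ e₂ g f = 0 := by
  refine eq_zero_of_map_add_of_map_single
    (φ := fun f => torusGamma e₁ e₂ f g + torusGamma e₁ e₂ g f)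
    (fun f f' => by simp only [torusGamma_add_left, torusGamma_add_right]; abel)
    (fun n a => ?_) f
  refine eq_zero_of_map_add_of_map_single
    (φ := fun g => torusGamma e₁ e₂ (single n a) g + torusGamma e₁ e₂ g (single n a))
    (fun g g' => by simp only [torusGamma_add_left, torusGamma_add_right]; abel)
    (fun m b => ?_) g
  simp only [torusGamma_single_single]
  linear_combination a * b * torusGamma0_add_swap e₁ e₂ n m

theorem torusGamma0_of_even {p q : ℤ} (hp : Even p) (hq : Even q) :
    torusGamma0 e₁ e₂ p q = if p + q = 0 then -(p : ℂ) else 0 := by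
  simp only [torusGamma0, if_pos (And.intro hp hq), eq_neg_iff_add_eq_zero, add_comm q]
  split_ifs <;> ring

theorem torusGamma0_of_odd {p q : ℤ} (hp : Odd p) (hq : Odd q) :
    torusGamma0 e₁ e₂ p q = (if p + q = 0 then -(p : ℂ) else 0)
      + (if p + q = 2 then 3 * e₁ * (1 - p) else 0)
      + (if p + q = 4 then (e₁ - e₂) * (2 * e₁ + e₂) * (2 - p) else 0) := by
  have hpq : ¬(Even p ∧ Even q) := fun h => Int.not_even_iff_odd.2 hp h.1
  simp only [torusGamma0, if_neg hpq, if_pos (And.intro hp hq), eq_neg_iff_add_eq_zero,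
    eq_neg_add_iff_add_eq, add_comm q p]
  split_ifs <;> ring

theorem torusGamma0_eq_zero_of_odd_add {p q : ℤ} (h : Odd (p + q)) : torusGamma0 e₁ e₂ p q = 0 := by
  have hee : ¬(Even p ∧ Even q) := fun h' => Int.not_even_iff_odd.2 h (h'.1.add h'.2)
  have hoo : ¬(Odd p ∧ Odd q) := fun h' => Int.not_even_iff_odd.2 h (h'.1.add_odd h'.2)
  simp only [torusGamma0, if_neg hee, if_neg hoo]

/-- `γ(AₙAₘ, Aₖ)`. -/
noncomputable def torusGammaMul0 (n m k : ℤ) : ℂ :=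
  if Even n ∨ Even m then torusGamma0 e₁ e₂ (n + m) k
  else torusGamma0 e₁ e₂ (n + m) k + 3 * e₁ * torusGamma0 e₁ e₂ (n + m - 2) k
    + (e₁ - e₂) * (2 * e₁ + e₂) * torusGamma0 e₁ e₂ (n + m - 4) k

theorem torusGamma_torusMul_single (n m k : ℤ) (a b c : ℂ) :
    torusGamma e₁ e₂ (torusMul e₁ e₂ (single n a) (single m b)) (single k c)
      = a * b * c * torusGammaMul0 e₁ e₂ n m k := by
  rw [torusMul_single_single, torusMulKernel, torusGammaMul0]
  dsimp only [AddMonoidHom.coe_mk, ZeroHom.coe_mk]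
  split_ifs
  · rw [torusGamma_single_single]
  · simp only [torusGamma_add_left, smul_single, torusGamma_single_single, smul_eq_mul]; ring

theorem torusGammaMul0_eq_zero_of_odd_add {n m k : ℤ} (h : Odd (n + m + k)) :
    torusGammaMul0 e₁ e₂ n m k = 0 := by
  have h₂ : Odd (n + m - 2 + k) := by rw [sub_add_eq_add_sub]; exact h.sub_even even_two
  have h₄ : Odd (n + m - 4 + k) := by
    rw [sub_add_eq_add_sub]; exact h.sub_even (by decide)
  simp [torusGammaMul0, torusGamma0_eq_zero_of_odd_add, h, h₂, h₄]

theorem torusGammaMul0_of_odd_of_odd {n m k : ℤ} (hn : Odd n) (hm : Odd m) (hk : Even k) :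
    torusGammaMul0 e₁ e₂ n m k = (if n + m + k = 0 then -((n : ℂ) + m) else 0)
      + (if n + m + k = 2 then -(3 * e₁ * (n + m - 2)) else 0)
      + (if n + m + k = 4 then -((e₁ - e₂) * (2 * e₁ + e₂) * (n + m - 4)) else 0) := by
  have hnm : Even (n + m) := hn.add_odd hm
  have hnm' : ¬(Even n ∨ Even m) := by
    simp only [not_or, Int.not_even_iff_odd]; exact ⟨hn, hm⟩
  rw [torusGammaMul0, if_neg hnm', torusGamma0_of_even e₁ e₂ hnm hk,
    torusGamma0_of_even e₁ e₂ (hnm.sub even_two) hk,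
    torusGamma0_of_even e₁ e₂ (hnm.sub (by decide)) hk]
  simp only [sub_add_eq_add_sub, sub_eq_zero]
  push_cast
  split_ifs <;> ring

theorem torusGammaMul0_cyclic_of_even {n m k : ℤ} (hn : Even n) (hm : Even m) (hk : Even k) :
    torusGammaMul0 e₁ e₂ n m k + torusGammaMul0 e₁ e₂ m k n + torusGammaMul0 e₁ e₂ k n m = 0 := by
  simp only [torusGammaMul0, if_pos (Or.inl hn), if_pos (Or.inl hm), if_pos (Or.inl hk),
    torusGamma0_of_even e₁ e₂ (hn.add hm) hk, torusGamma0_of_even e₁ e₂ (hm.add hk) hn,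
    torusGamma0_of_even e₁ e₂ (hk.add hn) hm,
    show m + k + n = n + m + k by ring, show k + n + m = n + m + k by ring]
  obtain ⟨s, rfl⟩ : ∃ s, k = s - n - m := ⟨n + m + k, by ring⟩
  simp only [show n + m + (s - n - m) = s by ring]
  split_ifs <;> (subst_vars; push_cast; ring)

theorem torusGammaMul0_cyclic_of_odd_of_odd {n m k : ℤ} (hn : Odd n) (hm : Odd m) (hk : Even k) :
    torusGammaMul0 e₁ e₂ n m k + torusGammaMul0 e₁ e₂ m k n + torusGammaMul0 e₁ e₂ k n m = 0 := by
  rw [torusGammaMul0_of_odd_of_odd e₁ e₂ hn hm hk, torusGammaMul0, if_pos (Or.inr hk),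
    torusGamma0_of_odd e₁ e₂ (hm.add_even hk) hn, torusGammaMul0, if_pos (Or.inl hk),
    torusGamma0_of_odd e₁ e₂ (hk.add_odd hn) hm,
    show m + k + n = n + m + k by ring, show k + n + m = n + m + k by ring]
  obtain ⟨s, rfl⟩ : ∃ s, k = s - n - m := ⟨n + m + k, by ring⟩
  simp only [show n + m + (s - n - m) = s by ring]
  split_ifs <;> first | omega | (subst_vars; push_cast; ring)

theorem torusGammaMul0_cyclic (n m k : ℤ) :
    torusGammaMul0 e₁ e₂ n m k + torusGammaMul0 e₁ e₂ m k n + torusGammaMul0 e₁ e₂ k n m = 0 := by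
  have hmkn : m + k + n = n + m + k := by ring
  have hknm : k + n + m = n + m + k := by ring
  rcases Int.even_or_odd (n + m + k) with hs | hs
  · rcases Int.even_or_odd n with hn | hn <;> rcases Int.even_or_odd m with hm | hm
    · have hk : Even k := by simpa using hs.sub (hn.add hm)
      exact torusGammaMul0_cyclic_of_even e₁ e₂ hn hm hk
    · have hk : Odd k := by simpa using hs.sub_odd (hn.add_odd hm)
      linear_combination torusGammaMul0_cyclic_of_odd_of_odd e₁ e₂ hm hk hn
    · have hk : Odd k := by simpa using hs.sub_odd (hn.add_even hm)
      linear_combination torusGammaMul0_cyclic_of_odd_of_odd e₁ e₂ hk hn hm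
    · have hk : Even k := by simpa using hs.sub (hn.add_odd hm)
      exact torusGammaMul0_cyclic_of_odd_of_odd e₁ e₂ hn hm hk
  · rw [torusGammaMul0_eq_zero_of_odd_add e₁ e₂ hs,
      torusGammaMul0_eq_zero_of_odd_add e₁ e₂ (hmkn ▸ hs),
      torusGammaMul0_eq_zero_of_odd_add e₁ e₂ (hknm ▸ hs), add_zero, add_zero]

theorem torusGamma_torusMul_cyclic (f g h : ℤ →₀ ℂ) :
    torusGamma e₁ e₂ (torusMul e₁ e₂ f g) h + torusGamma e₁ e₂ (torusMul e₁ e₂ g h) f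
      + torusGamma e₁ e₂ (torusMul e₁ e₂ h f) g = 0 := by
  refine eq_zero_of_rotate_of_map_add_left
    (F := fun f g h => torusGamma e₁ e₂ (torusMul e₁ e₂ f g) h
      + torusGamma e₁ e₂ (torusMul e₁ e₂ g h) f + torusGamma e₁ e₂ (torusMul e₁ e₂ h f) g)
    (fun f g h => by ring) (fun f f' g h => ?_) (fun n a m b k c => ?_) f g h
  · simp only [torusMul_add_left, torusMul_add_right, torusGamma_add_left, torusGamma_add_right]
    ring
  · simp only [torusGamma_torusMul_single]
    linear_combination a * b * c * torusGammaMul0_cyclic e₁ e₂ n m k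

end Torus

/-- the torus cocycle `γ` is antisymmetric and satisfies the cyclic cocycle
identity `γ(AₙAₘ, Aₖ) + γ(AₘAₖ, Aₙ) + γ(AₖAₙ, Aₘ) = 0` w.r.t. the torus product. -/
theorem torusGamma_cocycle (e₁ e₂ : ℂ) :
    (∀ f g : ℤ →₀ ℂ, torusGamma e₁ e₂ f g = - torusGamma e₁ e₂ g f) ∧
    (∀ f g h : ℤ →₀ ℂ,
      torusGamma e₁ e₂ (torusMul e₁ e₂ f g) h
        + torusGamma e₁ e₂ (torusMul e₁ e₂ g h) f
        + torusGamma e₁ e₂ (torusMul e₁ e₂ h f) g = 0) :=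
  ⟨fun f g => eq_neg_of_add_eq_zero_left (torusGamma_add_swap e₁ e₂ f g),
    torusGamma_torusMul_cyclic e₁ e₂⟩
end
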